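/- arXiv:1503.04028 — 8 statements merged into one kernel-verified Lean document; each statement's English description precedes it below -/
import Mathlib

section
/- Given a subgroup U of G, a system of representatives (p^j)_{j=1}^{R(U)} of the U-orbits on preference profiles, and any choice (q_j)_{j=1}^{R(U)} with q_j ∈ S₁^U(p^j) for each j, there exists a unique U-symmetric rule F such that F(p^j) = q_j for all j. Consequently the number of U-symmetric rules equals the product over j of |S₁^U(p^j)|. -/
/-- A preference profile: each individual `i : Fin h` has a linear order on the `n`
alternatives, identified with the permutation of `Fin n` mapping ranks to alternatives. -/
abbrev Profile (h n : Nat) := Fin h → Equiv.Perm (Fin n)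

/-- The order-reversing permutation `ρ₀`. -/
def rho0 (n : Nat) : Equiv.Perm (Fin n) := Fin.revPerm

/-- The subgroup `Ω = {id, ρ₀}` of `S_n` (generated by `ρ₀`, which has order 2). -/
def Omega (n : Nat) : Subgroup (Equiv.Perm (Fin n)) := Subgroup.zpowers (rho0 n)

/-- `ρ₀` as an element of `Ω`. -/
def omegaRho0 (n : Nat) : Omega n := ⟨rho0 n, Subgroup.mem_zpowers _⟩

/-- The group `G = S_h × S_n × Ω`. -/
abbrev GG (h n : Nat) := Equiv.Perm (Fin h) × Equiv.Perm (Fin n) × (Omega n)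

/-- The action of `(φ, ψ, ρ) ∈ G` on a profile: `(p^{(φ,ψ,ρ)})_i = ψ p_{φ⁻¹(i)} ρ`. -/
def act {h n : Nat} (g : GG h n) (p : Profile h n) : Profile h n :=
  fun i => g.2.1 * p (g.1⁻¹ i) * (g.2.2 : Equiv.Perm (Fin n))

/-- A rule `F` is `U`-symmetric if `F(p^{(φ,ψ,ρ)}) = ψ F(p) ρ` for all `p` and `(φ,ψ,ρ) ∈ U`. -/
def USymm {h n : Nat} (U : Set (GG h n)) (F : Profile h n → Equiv.Perm (Fin n)) : Prop :=
  ∀ p : Profile h n, ∀ g ∈ U, F (act g p) = g.2.1 * F p * (g.2.2 : Equiv.Perm (Fin n))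

/-- `S₁^U(p) = { q : ψ q ρ = q for all (φ,ψ,ρ) in the stabilizer of p in U }`. -/
def S1set {h n : Nat} (U : Set (GG h n)) (p : Profile h n) : Set (Equiv.Perm (Fin n)) :=
  {q | ∀ g ∈ U, act g p = p → g.2.1 * q * (g.2.2 : Equiv.Perm (Fin n)) = q}

/-- Regularity of `U`: for every profile `p` there is `ψ*` conjugate to `ρ₀` with
`Stab_U(p) ⊆ (S_h × {id} × {id}) ∪ (S_h × {ψ*} × {ρ₀})`. -/
def Regular {h n : Nat} (U : Set (GG h n)) : Prop :=
  ∀ p : Profile h n, ∃ ψs : Equiv.Perm (Fin n), IsConj (rho0 n) ψs ∧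
    ∀ g ∈ U, act g p = p →
      (g.2.1 = 1 ∧ (g.2.2 : Equiv.Perm (Fin n)) = 1) ∨
      (g.2.1 = ψs ∧ (g.2.2 : Equiv.Perm (Fin n)) = rho0 n)

/-- Number of individuals strictly preferring `x` to `y` in profile `p`
(smaller rank = better, since permutations send ranks to alternatives). -/
def prefCount {h n : Nat} (p : Profile h n) (x y : Fin n) : Nat :=
  (Finset.univ.filter fun i => (p i)⁻¹ x < (p i)⁻¹ y).card

/-- `C_ν(p)`: linear orders consistent with the `ν`-majority principle applied to `p`. -/
def Cset {h n : Nat} (p : Profile h n) (ν : Nat) : Set (Equiv.Perm (Fin n)) :=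
  {q | ∀ x y : Fin n, ν ≤ prefCount p x y → q⁻¹ x < q⁻¹ y}

/-- `ν(p)`: the minimal majority threshold `ν ∈ ℕ ∩ (h/2, h]` with `C_ν(p) ≠ ∅`. -/
noncomputable def nuMin {h n : Nat} (p : Profile h n) : Nat :=
  sInf {ν : Nat | h < 2 * ν ∧ ν ≤ h ∧ (Cset p ν).Nonempty}

/-- minimal majority rule. -/
def MinMaj {h n : Nat} (F : Profile h n → Equiv.Perm (Fin n)) : Prop :=
  ∀ p : Profile h n, F p ∈ Cset p (nuMin p)

/-- `gcd(T(φ))`: the gcd of the lengths of the orbits (cycles) of `φ`. -/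
noncomputable def gcdOrbits {h : Nat} (phi : Equiv.Perm (Fin h)) : Nat :=
  Finset.univ.gcd fun i => Function.minimalPeriod (⇑phi) i

lemma omega_comm {n : Nat} (a b : Omega n) :
    (a : Equiv.Perm (Fin n)) * b = (b : Equiv.Perm (Fin n)) * a := by
  obtain ⟨k, hk⟩ := Subgroup.mem_zpowers_iff.mp a.2
  obtain ⟨l, hl⟩ := Subgroup.mem_zpowers_iff.mp b.2
  rw [← hk, ← hl, ← zpow_add, ← zpow_add, add_comm]

lemma act_one {h n : Nat} (p : Profile h n) : act (1 : GG h n) p = p := by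
  funext i; simp [act]

lemma act_mul {h n : Nat} (g g' : GG h n) (p : Profile h n) :
    act (g * g') p = act g (act g' p) := by
  funext i
  simp only [act, Prod.fst_mul, Prod.snd_mul, mul_inv_rev, Equiv.Perm.coe_mul,
    Function.comp_apply, Subgroup.coe_mul]
  rw [show ((g.2.2 : Equiv.Perm (Fin n)) * g'.2.2) = (g'.2.2 : Equiv.Perm (Fin n)) * g.2.2
      from omega_comm _ _]
  group

lemma conj_eq {M : Type*} [Group M] (ψ ψ' a ρ ρ' : M) (hc : ρ * ρ' = ρ' * ρ)
    (hthis : (ψ'⁻¹ * ψ) * a * (ρ'⁻¹ * ρ) = a) : ψ * a * ρ = ψ' * a * ρ' := by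
  have h2 : ρ'⁻¹ * ρ * ρ' = ρ := by
    rw [mul_assoc, hc, ← mul_assoc, inv_mul_cancel, one_mul]
  conv_rhs => rw [← hthis]
  conv_lhs => rw [← h2]
  group

lemma key {h n : Nat} (U : Subgroup (GG h n))
    (R : Nat) (pv : Fin R → Profile h n)
    (hrep : ∀ p : Profile h n, ∃! j : Fin R, ∃ g ∈ U, act g (pv j) = p)
    (q : Fin R → Equiv.Perm (Fin n))
    (hq : ∀ j, q j ∈ S1set (U : Set (GG h n)) (pv j)) :
    ∃! F : Profile h n → Equiv.Perm (Fin n),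
        USymm (U : Set (GG h n)) F ∧ ∀ j, F (pv j) = q j := by
  classical
  have hrep' : ∀ p : Profile h n, ∃ j : Fin R, ∃ g, g ∈ U ∧ act g (pv j) = p := by
    intro p
    obtain ⟨j, ⟨g, hgU, hg⟩, -⟩ := hrep p
    exact ⟨j, g, hgU, hg⟩
  choose j0 g0 hg0U hg0 using hrep'
  have huniq : ∀ (p : Profile h n) (j : Fin R), (∃ g ∈ U, act g (pv j) = p) → j = j0 p := by
    intro p j hj
    obtain ⟨j', -, hu⟩ := hrep p
    rw [hu j hj, hu (j0 p) ⟨g0 p, hg0U p, hg0 p⟩]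
  set F0 : Profile h n → Equiv.Perm (Fin n) :=
    fun p => (g0 p).2.1 * q (j0 p) * ((g0 p).2.2 : Equiv.Perm (Fin n)) with hF0
  have compat : ∀ (p : Profile h n) (j : Fin R) (g : GG h n), g ∈ U → act g (pv j) = p →
      g.2.1 * q j * (g.2.2 : Equiv.Perm (Fin n)) = F0 p := by
    intro p j g hgU hg
    have hj : j = j0 p := huniq p j ⟨g, hgU, hg⟩
    rw [hj] at hg ⊢
    have hstabU : (g0 p)⁻¹ * g ∈ U := mul_mem (inv_mem (hg0U p)) hgU
    have h1 : act ((g0 p)⁻¹) p = pv (j0 p) := by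
      have h := congrArg (act ((g0 p)⁻¹)) (hg0 p)
      rw [← act_mul, inv_mul_cancel, act_one] at h
      exact h.symm
    have hstab : act ((g0 p)⁻¹ * g) (pv (j0 p)) = pv (j0 p) := by
      rw [act_mul, hg, h1]
    have hS := hq (j0 p) ((g0 p)⁻¹ * g) hstabU hstab
    simp only [Prod.fst_mul, Prod.snd_mul, Prod.fst_inv, Prod.snd_inv,
      Subgroup.coe_mul, InvMemClass.coe_inv] at hS
    exact conj_eq _ _ _ _ _ (omega_comm g.2.2 (g0 p).2.2) hS
  refine ⟨F0, ⟨?_, ?_⟩, ?_⟩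
  · intro p g hgU
    have h1 : act (g * g0 p) (pv (j0 p)) = act g p := by rw [act_mul, hg0 p]
    have h2 := compat (act g p) (j0 p) (g * g0 p) (mul_mem hgU (hg0U p)) h1
    rw [← h2]
    simp only [hF0, Prod.fst_mul, Prod.snd_mul, Subgroup.coe_mul]
    rw [show ((g.2.2 : Equiv.Perm (Fin n)) * (g0 p).2.2)
        = ((g0 p).2.2 : Equiv.Perm (Fin n)) * g.2.2 from omega_comm _ _]
    group
  · intro j
    have := compat (pv j) j 1 (one_mem U) (act_one (pv j))
    simpa using this.symm
  · intro F ⟨hFs, hFq⟩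
    funext p
    have h1 : F p = F (act (g0 p) (pv (j0 p))) := by rw [hg0 p]
    rw [h1, hFs (pv (j0 p)) (g0 p) (hg0U p), hFq (j0 p)]

theorem stmt3 {h n : Nat} (hh : 2 ≤ h) (hn : 2 ≤ n) (U : Subgroup (GG h n))
    (R : Nat) (pv : Fin R → Profile h n)
    (hrep : ∀ p : Profile h n, ∃! j : Fin R, ∃ g ∈ U, act g (pv j) = p)
    (q : Fin R → Equiv.Perm (Fin n))
    (hq : ∀ j, q j ∈ S1set (U : Set (GG h n)) (pv j)) :
    (∃! F : Profile h n → Equiv.Perm (Fin n),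
        USymm (U : Set (GG h n)) F ∧ ∀ j, F (pv j) = q j) ∧
    Nat.card {F : Profile h n → Equiv.Perm (Fin n) // USymm (U : Set (GG h n)) F}
      = ∏ j : Fin R, (S1set (U : Set (GG h n)) (pv j)).ncard := by
  classical
  refine ⟨key U R pv hrep q hq, ?_⟩
  have hmem : ∀ (F : Profile h n → Equiv.Perm (Fin n)), USymm (U : Set (GG h n)) F →
      ∀ j, F (pv j) ∈ S1set (U : Set (GG h n)) (pv j) := by
    intro F hF j g hgU hfix
    have := hF (pv j) g hgU
    rw [hfix] at this
    exact this.symm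
  have e : {F : Profile h n → Equiv.Perm (Fin n) // USymm (U : Set (GG h n)) F}
      ≃ Π j : Fin R, (S1set (U : Set (GG h n)) (pv j)) := by
    refine
      { toFun := fun F j => ⟨F.1 (pv j), hmem F.1 F.2 j⟩
        invFun := fun qq =>
          ⟨(key U R pv hrep (fun j => (qq j : Equiv.Perm (Fin n))) (fun j => (qq j).2)).choose,
           (key U R pv hrep _ (fun j => (qq j).2)).choose_spec.1.1⟩
        left_inv := ?_
        right_inv := ?_ }
    · intro F
      apply Subtype.ext
      exact ((key U R pv hrep _ (fun j => (hmem F.1 F.2 j))).choose_spec.2 F.1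
        ⟨F.2, fun j => rfl⟩).symm
    · intro qq
      funext j
      apply Subtype.ext
      exact (key U R pv hrep _ (fun j => (qq j).2)).choose_spec.1.2 j
  rw [Nat.card_congr e, Nat.card_pi]
  exact Finset.prod_congr rfl fun j _ => Nat.card_coe_set_eq _
end

section
/- If the set F^U of U-symmetric rules is nonempty, then U is regular: for every preference profile p there exists ψ* ∈ S_n conjugate to ρ₀ such that Stab_U(p) ⊆ (S_h × {id} × {id}) ∪ (S_h × {ψ*} × {ρ₀}). -/
lemma rho0_sq (n : Nat) : rho0 n * rho0 n = 1 := by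
  ext x
  simp [rho0, Equiv.Perm.mul_apply, Fin.rev_rev]

lemma omega_cases {n : Nat} (r : Omega n) :
    (r : Equiv.Perm (Fin n)) = 1 ∨ (r : Equiv.Perm (Fin n)) = rho0 n := by
  obtain ⟨k, hk⟩ := r.2
  have h2 : rho0 n ^ (2 : ℤ) = 1 := by rw [zpow_two]; exact rho0_sq n
  rcases Int.even_or_odd k with ⟨m, hm⟩ | ⟨m, hm⟩
  · left
    rw [← hk]
    show rho0 n ^ k = 1
    rw [hm, ← two_mul, zpow_mul, h2, one_zpow]
  · right
    rw [← hk]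
    show rho0 n ^ k = rho0 n
    rw [hm, zpow_add, zpow_mul, h2, one_zpow, one_mul, zpow_one]

theorem stmt7 {h n : Nat} (hh : 2 ≤ h) (hn : 2 ≤ n) (U : Subgroup (GG h n))
    (hF : ∃ F : Profile h n → Equiv.Perm (Fin n), USymm (U : Set (GG h n)) F) :
    Regular (U : Set (GG h n)) := by
  obtain ⟨F, hU⟩ := hF
  intro p
  set q := F p with hq
  refine ⟨q * rho0 n * q⁻¹, isConj_iff.2 ⟨q, rfl⟩, ?_⟩
  intro g hg hfix
  have key := hU p g hg
  rw [hfix, ← hq] at key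
  have hinv : (rho0 n)⁻¹ = rho0 n := inv_eq_of_mul_eq_one_left (rho0_sq n)
  rcases omega_cases g.2.2 with h1 | h1
  · left
    refine ⟨?_, h1⟩
    rw [h1, mul_one] at key
    exact mul_right_cancel (key.symm.trans (one_mul q).symm)
  · right
    refine ⟨?_, h1⟩
    rw [h1] at key
    calc g.2.1 = (g.2.1 * q * rho0 n) * (rho0 n)⁻¹ * q⁻¹ := by group
      _ = q * (rho0 n)⁻¹ * q⁻¹ := by rw [← key]
      _ = q * rho0 n * q⁻¹ := by rw [hinv]
end

section
/- If U ≤ G is regular, then for every preference profile p, the set S₁^U(p) = { q ∈ S_n : ψ q ρ = q for all (φ,ψ,ρ) ∈ Stab_U(p) } equals L(N) if Stab_U(p) ≤ S_h × {id} × {id}, and equals the left coset u·C_{S_n}(ρ₀) (for u with ψ* = uρ₀u⁻¹ as in the regularity condition) otherwise; in particular |S₁^U(p)| is n! in the first case and 2^{⌊n/2⌋}⌊n/2⌋! in the second. -/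
/-!
Regularity leaves in the stabiliser of `p` only trivial elements and elements `(φ, ψ*, ρ₀)`,
and one stabilising element `(φ, uρ₀u⁻¹, ρ₀)` forces `ψ* = uρ₀u⁻¹`. Hence `S₁^U(p)` is the fixed set
of the single map `q ↦ uρ₀u⁻¹ q ρ₀`, which is `u · C(ρ₀)` since `ρ₀` is an involution. An involution
with `k` transpositions and `f` fixed points has a centraliser of order `f! 2^k k!`; for `ρ₀` on
`Fin n`, `k = ⌊n/2⌋` and `f ≤ 1`.
-/

open Equiv Finset Nat

theorem Equiv.Perm.nat_card_centralizer_of_sq_eq_one {α : Type*} [Fintype α] [DecidableEq α]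
    {σ : Perm α} (hσ : σ ^ 2 = 1) :
    Nat.card (Subgroup.centralizer {σ}) =
      (Fintype.card α - #σ.support)! * 2 ^ (#σ.support / 2) * (#σ.support / 2)! := by
  have hct : σ.cycleType = Multiset.replicate (Multiset.card σ.cycleType) 2 :=
    Perm.cycleType_of_pow_prime_eq_one hσ
  have hsupp : #σ.support = 2 * Multiset.card σ.cycleType := by
    rw [← Perm.sum_cycleType, hct, Multiset.sum_replicate, smul_eq_mul, Multiset.card_replicate,
      mul_comm]
  rw [Perm.nat_card_centralizer, Perm.sum_cycleType, hsupp, Nat.mul_div_cancel_left _ two_pos, hct]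
  rcases Nat.eq_zero_or_pos (Multiset.card σ.cycleType) with h0 | hpos
  · simp [h0]
  · simp [Multiset.toFinset_replicate, hpos.ne', Multiset.prod_replicate]

theorem Fin.card_support_revPerm (n : ℕ) :
    #(Fin.revPerm : Perm (Fin n)).support = 2 * (n / 2) := by
  obtain ⟨k, rfl | rfl⟩ := Nat.even_or_odd' n
  · have : (Fin.revPerm : Perm (Fin (2 * k))).support = univ := by
      ext i
      simp only [Perm.mem_support, Fin.revPerm_apply, ne_eq, Fin.ext_iff, Fin.val_rev, mem_univ,
        iff_true]
      omega
    simp [this]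
  · have : (Fin.revPerm : Perm (Fin (2 * k + 1))).support = univ.erase ⟨k, by omega⟩ := by
      ext i
      simp only [Perm.mem_support, Fin.revPerm_apply, ne_eq, Fin.ext_iff, Fin.val_rev, mem_erase,
        mem_univ, and_true]
      omega
    rw [this, card_erase_of_mem (mem_univ _), Finset.card_univ, Fintype.card_fin]
    omega

theorem image_mul_left_setOf_commute {G : Type*} [Group G] {r : G} (hr : r * r = 1) (u : G) :
    (u * ·) '' {v | v * r = r * v} = {q | u * r * u⁻¹ * q * r = q} := by
  ext q
  simp only [Set.mem_image, Set.mem_ofPred_eq]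
  constructor
  · rintro ⟨v, hv, rfl⟩
    calc u * r * u⁻¹ * (u * v) * r = u * (r * v * r) := by group
      _ = u * v := by rw [← hv, mul_assoc, hr, mul_one]
  · intro hq
    have hconj : r * (u⁻¹ * q) * r = u⁻¹ * q :=
      calc r * (u⁻¹ * q) * r = u⁻¹ * (u * r * u⁻¹ * q * r) := by group
        _ = u⁻¹ * q := by rw [hq]
    refine ⟨u⁻¹ * q, ?_, mul_inv_cancel_left u q⟩
    calc u⁻¹ * q * r = r * (r * (u⁻¹ * q) * r) := by rw [← mul_assoc, ← mul_assoc, hr, one_mul]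
      _ = r * (u⁻¹ * q) := by rw [hconj]

lemma rho0_mul_self (n : ℕ) : rho0 n * rho0 n = 1 := by
  ext i
  simp [rho0]

lemma ncard_setOf_commute_rho0 (n : ℕ) :
    {v : Perm (Fin n) | v * rho0 n = rho0 n * v}.ncard = 2 ^ (n / 2) * (n / 2)! := by
  have hC : {v : Perm (Fin n) | v * rho0 n = rho0 n * v} = Subgroup.centralizer {rho0 n} :=
    Set.ext fun _ => Subgroup.mem_centralizer_singleton_iff.symm
  rw [hC, ← Nat.card_coe_set_eq, SetLike.coe_sort_coe,
    Perm.nat_card_centralizer_of_sq_eq_one ((sq _).trans (rho0_mul_self n)), rho0,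
    Fin.card_support_revPerm, Fintype.card_fin, Nat.mul_div_cancel_left _ two_pos,
    Nat.factorial_eq_one.2 (by omega), one_mul]

section Stabilizer

variable {h n : ℕ} {U : Set (GG h n)} {p : Profile h n}

lemma S1set_eq_univ_of_stab_trivial
    (htriv : ∀ g ∈ U, act g p = p → g.2.1 = 1 ∧ (g.2.2 : Perm (Fin n)) = 1) :
    S1set U p = Set.univ :=
  Set.eq_univ_of_forall fun q g hg hgp => by
    obtain ⟨hψ, hρ⟩ := htriv g hg hgp
    rw [hψ, hρ, one_mul, mul_one]

lemma S1set_eq_setOf_of_regular (hreg : Regular U) {u : Perm (Fin n)} {g : GG h n} (hg : g ∈ U)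
    (hgp : act g p = p) (hρ : (g.2.2 : Perm (Fin n)) = rho0 n) (hψ : g.2.1 = u * rho0 n * u⁻¹) :
    S1set U p = {q | u * rho0 n * u⁻¹ * q * rho0 n = q} := by
  obtain ⟨ψs, hconj, hstab⟩ := hreg p
  have hψs : ψs = u * rho0 n * u⁻¹ := by
    rcases hstab g hg hgp with ⟨-, hρ1⟩ | ⟨hψ1, -⟩
    · have hρ0 : rho0 n = 1 := hρ ▸ hρ1
      rw [hρ0, isConj_one_right] at hconj
      rw [hconj, hρ0, mul_one, mul_inv_cancel]
    · rw [← hψ1, hψ]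
  ext q
  refine ⟨fun hq => hψ ▸ hρ ▸ hq g hg hgp, fun hq g' hg' hg'p => ?_⟩
  rcases hstab g' hg' hg'p with ⟨hψ', hρ'⟩ | ⟨hψ', hρ'⟩
  · rw [hψ', hρ', one_mul, mul_one]
  · rw [hψ', hρ', hψs]
    exact hq

end Stabilizer

theorem stmt8_general {h n : Nat} (U : Subgroup (GG h n))
    (hreg : Regular (U : Set (GG h n))) (p : Profile h n) :
    ((∀ g ∈ U, act g p = p → g.2.1 = 1 ∧ (g.2.2 : Equiv.Perm (Fin n)) = 1) →
      S1set (U : Set (GG h n)) p = Set.univ ∧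
      (S1set (U : Set (GG h n)) p).ncard = n.factorial) ∧
    (∀ u : Equiv.Perm (Fin n), ∀ g ∈ U, act g p = p →
      (g.2.2 : Equiv.Perm (Fin n)) = rho0 n → g.2.1 = u * rho0 n * u⁻¹ →
      S1set (U : Set (GG h n)) p
          = (fun v => u * v) '' {v : Equiv.Perm (Fin n) | v * rho0 n = rho0 n * v} ∧
      (S1set (U : Set (GG h n)) p).ncard = 2 ^ (n / 2) * (n / 2).factorial) := by
  refine ⟨fun htriv => ?_, fun u g hg hgp hρ hψ => ?_⟩
  · rw [S1set_eq_univ_of_stab_trivial htriv, Set.ncard_univ, Nat.card_perm,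
      Nat.card_eq_fintype_card, Fintype.card_fin]
    exact ⟨rfl, rfl⟩
  · rw [S1set_eq_setOf_of_regular hreg hg hgp hρ hψ,
      ← image_mul_left_setOf_commute (rho0_mul_self n) u,
      Set.ncard_image_of_injective _ (mul_right_injective u)]
    exact ⟨rfl, ncard_setOf_commute_rho0 n⟩

theorem stmt8 {h n : Nat} (hh : 2 ≤ h) (hn : 2 ≤ n) (U : Subgroup (GG h n))
    (hreg : Regular (U : Set (GG h n))) (p : Profile h n) :
    ((∀ g ∈ U, act g p = p → g.2.1 = 1 ∧ (g.2.2 : Equiv.Perm (Fin n)) = 1) →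
      S1set (U : Set (GG h n)) p = Set.univ ∧
      (S1set (U : Set (GG h n)) p).ncard = n.factorial) ∧
    (∀ u : Equiv.Perm (Fin n), ∀ g ∈ U, act g p = p →
      (g.2.2 : Equiv.Perm (Fin n)) = rho0 n → g.2.1 = u * rho0 n * u⁻¹ →
      S1set (U : Set (GG h n)) p
          = (fun v => u * v) '' {v : Equiv.Perm (Fin n) | v * rho0 n = rho0 n * v} ∧
      (S1set (U : Set (GG h n)) p).ncard = 2 ^ (n / 2) * (n / 2).factorial) :=
  stmt8_general U hreg p
end

section
/- (Stabilizer divisibility) If U ≤ G, p is a preference profile, and (φ, ψ, id) ∈ Stab_U(p), then the order of ψ divides the length of every φ-orbit on H; equivalently |ψ| divides gcd(T(φ)), where T(φ) is the type (multiset of orbit lengths) of φ. -/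
theorem stmt9 {h n : Nat} (hh : 2 ≤ h) (hn : 2 ≤ n) (U : Subgroup (GG h n))
    (p : Profile h n) (φ : Equiv.Perm (Fin h)) (ψ : Equiv.Perm (Fin n))
    (hmem : ((φ, ψ, (1 : Omega n)) : GG h n) ∈ U)
    (hstab : act ((φ, ψ, (1 : Omega n)) : GG h n) p = p) :
    (∀ i : Fin h, orderOf ψ ∣ Function.minimalPeriod (⇑φ) i) ∧
    orderOf ψ ∣ gcdOrbits φ := by
  have hfix : ∀ i : Fin h, ψ * p (φ⁻¹ i) = p i := by
    intro i
    have := congrFun hstab i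
    simpa [act] using this
  have key : ∀ (k : ℕ) (i : Fin h), ψ ^ k * p ((φ⁻¹ ^ k) i) = p i := by
    intro k
    induction k with
    | zero => intro i; simp
    | succ k ih =>
      intro i
      have h1 : (φ⁻¹ ^ (k + 1)) i = (φ⁻¹ ^ k) (φ⁻¹ i) := by
        rw [pow_succ]; rfl
      calc ψ ^ (k + 1) * p ((φ⁻¹ ^ (k + 1)) i)
          = ψ * (ψ ^ k * p ((φ⁻¹ ^ k) (φ⁻¹ i))) := by
            rw [h1, pow_succ']; group
        _ = ψ * p (φ⁻¹ i) := by rw [ih]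
        _ = p i := hfix i
  have main : ∀ i : Fin h, orderOf ψ ∣ Function.minimalPeriod (⇑φ) i := by
    intro i
    set k := Function.minimalPeriod (⇑φ) i with hk
    have hper : (⇑φ)^[k] i = i := Function.iterate_minimalPeriod
    have hφk : (φ ^ k) i = i := by simpa [Equiv.Perm.iterate_eq_pow] using hper
    have hφik : (φ⁻¹ ^ k) i = i := by
      rw [inv_pow]
      exact (Equiv.Perm.eq_inv_iff_eq.mpr hφk).symm
    have := key k i
    rw [hφik] at this
    have hψk : ψ ^ k = 1 := by
      have := mul_right_cancel (a := ψ ^ k) (b := p i) (c := 1) (by simpa using this)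
      exact this
    exact orderOf_dvd_of_pow_eq_one hψk
  refine ⟨main, ?_⟩
  exact Finset.dvd_gcd fun i _ => main i
end

section
/- (Construction of a fixed profile) Let U ≤ G and suppose (φ, ψ, id) ∈ U with ψ ≠ id, and suppose π is a prime with π^a = |ψ|_π (the π-part of the order of ψ) dividing the length of every φ-orbit on H. Then there exists a preference profile p and an element (φ̂, ψ̂, id) ∈ Stab_U(p) with ψ̂ ≠ id; hence U is not regular. -/
/-
Replacing `(φ, ψ, id)` by its `k`-th power, `k` the `π'`-part of `|ψ|`, gives an element
`(σ, τ, id)` of `U` with `|τ| = π^a`, and `π^a` still divides every orbit length of `σ = φ^k`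
because `k` is prime to `π`. A profile fixed by `(σ, τ, id)` is a map `p` with
`p (σ i) = τ * p i`; it exists as soon as `|τ|` divides every `σ`-orbit length: choose a point
`r` on each orbit and put `p (σ^j r) = τ^j`. As `τ ≠ id` while `ρ₀ ≠ id`, this stabilizer
element is of neither form allowed by regularity.
-/

open Function Equiv

section EquivariantMap

variable {α M : Type*} [Group M] {σ : Perm α} {τ : M}

theorem zpow_eq_zpow_of_zpow_apply_eq (hτ : ∀ x, orderOf τ ∣ minimalPeriod σ x) {x : α}
    {u v : ℤ} (h : (σ ^ u) x = (σ ^ v) x) : τ ^ u = τ ^ v := by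
  have hfix : (σ ^ (-v + u)) • x = x := by
    rw [zpow_add, zpow_neg, Perm.smul_def, Perm.mul_apply, h, Perm.coe_inv,
      Equiv.symm_apply_apply]
  rw [MulAction.zpow_smul_eq_iff_minimalPeriod_dvd] at hfix
  have := orderOf_dvd_iff_zpow_eq_one.mp ((Int.natCast_dvd_natCast.mpr (hτ x)).trans hfix)
  rw [zpow_add, zpow_neg, inv_mul_eq_one] at this
  exact this.symm

theorem exists_map_apply_eq_mul (hτ : ∀ x, orderOf τ ∣ minimalPeriod σ x) :
    ∃ f : α → M, ∀ x, f (σ x) = τ * f x := by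
  let r : α → α := fun x => (Quotient.mk (Perm.SameCycle.setoid σ) x).out
  have hr : ∀ x, r (σ x) = r x := fun x =>
    congrArg Quotient.out
      (Quotient.sound (Perm.sameCycle_apply_left.mpr (Perm.SameCycle.refl σ x)))
  have hsame : ∀ x, σ.SameCycle (r x) x := fun x =>
    Quotient.mk_out (s := Perm.SameCycle.setoid σ) x
  choose k hk using hsame
  refine ⟨fun x => τ ^ k x, fun x => ?_⟩
  rw [← zpow_one_add]
  refine zpow_eq_zpow_of_zpow_apply_eq hτ (x := r x) ?_
  rw [zpow_add, zpow_one, Perm.mul_apply, hk, ← hr x, hk]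

end EquivariantMap

theorem orderOf_pow_ordCompl {G : Type*} [Monoid G] (x : G) (p : ℕ) :
    orderOf (x ^ ordCompl[p] (orderOf x)) = ordProj[p] (orderOf x) := by
  rcases eq_or_ne (orderOf x) 0 with h0 | h0
  · simp [h0]
  rw [orderOf_pow_of_dvd (Nat.ordCompl_pos p h0).ne' (Nat.ordCompl_dvd _ p),
    Nat.div_eq_of_eq_mul_left (Nat.ordCompl_pos p h0) (Nat.ordProj_mul_ordCompl_eq_self _ p).symm]

theorem Equiv.Perm.dvd_minimalPeriod_pow_of_coprime {α : Type*} {σ : Perm α} {x : α} {d k : ℕ}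
    (hd : d ∣ minimalPeriod σ x) (hdk : d.Coprime k) : d ∣ minimalPeriod ⇑(σ ^ k) x := by
  have hper : IsPeriodicPt σ (k * minimalPeriod ⇑(σ ^ k) x) x := by
    rw [IsPeriodicPt, IsFixedPt, iterate_mul, ← Perm.coe_pow]
    exact isPeriodicPt_minimalPeriod _ x
  exact hdk.dvd_of_dvd_mul_left (hd.trans hper.minimalPeriod_dvd)

theorem rho0_ne_one {n : ℕ} (hn : 2 ≤ n) : rho0 n ≠ 1 := by
  intro h
  have h0 := congrArg (fun e : Perm (Fin n) => (e ⟨0, by omega⟩ : ℕ)) h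
  simp only [rho0, Fin.revPerm_apply, Fin.val_rev, Perm.coe_one, id_eq] at h0
  omega

theorem act_eq_self_of_apply_eq_mul {h n : ℕ} {φ : Perm (Fin h)} {ψ : Perm (Fin n)}
    {p : Profile h n} (hp : ∀ i, p (φ i) = ψ * p i) : act (φ, ψ, 1) p = p := by
  funext i
  simp only [act, OneMemClass.coe_one, mul_one, ← hp, Perm.coe_inv, Equiv.apply_symm_apply]

theorem not_regular_of_exists_act_eq_self {h n : ℕ} (hn : 2 ≤ n) {U : Set (GG h n)}
    (hstab : ∃ (p : Profile h n) (g : GG h n), g ∈ U ∧ act g p = p ∧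
      g.2.1 ≠ 1 ∧ (g.2.2 : Perm (Fin n)) = 1) : ¬ Regular U := fun hreg => by
  obtain ⟨p, g, hg, hfix, hψ, hρ⟩ := hstab
  obtain ⟨_, _, hregular⟩ := hreg p
  rcases hregular g hg hfix with ⟨hψ1, _⟩ | ⟨_, hρ0⟩
  · exact hψ hψ1
  · exact rho0_ne_one hn (hρ0.symm.trans hρ)

theorem stmt10_general {h n : Nat} (hn : 2 ≤ n) (U : Subgroup (GG h n))
    (φ : Equiv.Perm (Fin h)) (ψ : Equiv.Perm (Fin n))
    (hmem : ((φ, ψ, (1 : Omega n)) : GG h n) ∈ U)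
    (π a : Nat) (hπ : π.Prime) (ha : 1 ≤ a)
    (hpart : (orderOf ψ).factorization π = a)
    (hdvd : ∀ i : Fin h, π ^ a ∣ Function.minimalPeriod (⇑φ) i) :
    (∃ (p : Profile h n) (g : GG h n), g ∈ U ∧ act g p = p ∧
      g.2.1 ≠ 1 ∧ (g.2.2 : Equiv.Perm (Fin n)) = 1) ∧
    ¬ Regular (U : Set (GG h n)) := by
  set k := ordCompl[π] (orderOf ψ)
  have hord : orderOf (ψ ^ k) = π ^ a := by rw [orderOf_pow_ordCompl, hpart]
  have hcop : (π ^ a).Coprime k := by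
    rw [← hpart]
    exact (Nat.coprime_ordCompl hπ (orderOf_pos ψ).ne').pow_left _
  have hψk : ψ ^ k ≠ 1 := by
    rw [Ne, ← orderOf_eq_one_iff, hord]
    exact (Nat.one_lt_pow (by omega) hπ.one_lt).ne'
  obtain ⟨p, hp⟩ := exists_map_apply_eq_mul (σ := φ ^ k) (τ := ψ ^ k) fun i => by
    rw [hord]
    exact Perm.dvd_minimalPeriod_pow_of_coprime (hdvd i) hcop
  have hpow : ((φ, ψ, 1) : GG h n) ^ k = (φ ^ k, ψ ^ k, 1) := by simp
  have hstab : ∃ (p : Profile h n) (g : GG h n), g ∈ U ∧ act g p = p ∧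
      g.2.1 ≠ 1 ∧ (g.2.2 : Equiv.Perm (Fin n)) = 1 :=
    ⟨p, _, hpow ▸ pow_mem hmem k, act_eq_self_of_apply_eq_mul hp, hψk, rfl⟩
  exact ⟨hstab, not_regular_of_exists_act_eq_self hn hstab⟩

theorem stmt10 {h n : Nat} (hh : 2 ≤ h) (hn : 2 ≤ n) (U : Subgroup (GG h n))
    (φ : Equiv.Perm (Fin h)) (ψ : Equiv.Perm (Fin n))
    (hmem : ((φ, ψ, (1 : Omega n)) : GG h n) ∈ U) (hψ : ψ ≠ 1)
    (π a : Nat) (hπ : π.Prime) (ha : 1 ≤ a)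
    (hpart : (orderOf ψ).factorization π = a)
    (hdvd : ∀ i : Fin h, π ^ a ∣ Function.minimalPeriod (⇑φ) i) :
    (∃ (p : Profile h n) (g : GG h n), g ∈ U ∧ act g p = p ∧
      g.2.1 ≠ 1 ∧ (g.2.2 : Equiv.Perm (Fin n)) = 1) ∧
    ¬ Regular (U : Set (GG h n)) :=
  stmt10_general hn U φ ψ hmem π a hπ ha hpart hdvd
end

section
/- Let B = {B_j}_{j=1}^s be a partition of H and C = {C_k}_{k=1}^t a partition of N, and let c* = max_k |C_k|. Then the group V(B) × W(C) × {id} ≤ G is regular if and only if gcd( gcd(|B_1|,...,|B_s|), c*! ) = 1. -/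
/-!
If `g = (φ, ψ, id)` fixes `p`, then `p (φ i) = ψ * p i`, so `p (φ^k i) = ψ^k * p i` and the order
of `ψ` divides the length of every cycle of `φ`, hence every `|B_j|` (a union of such cycles).
It also divides `c*!`, as `ψ` permutes each `C_k`. So the gcd condition forces `ψ = 1`, which is
regularity with `ψ* = ρ₀`. Conversely, if a prime `q` divides every `|B_j|` and `c*!`, Cauchy's
theorem gives `ψ` of order `q` supported in a largest `C_k`. Writing each `B_j` as
`Fin r × ⟨ψ⟩`, let `φ` act by `ψ` on the second factor and let `p` be that projection: then
`(φ, ψ, id)` fixes `p` although `ψ ≠ 1`.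
-/

open Equiv Function MulAction

theorem orderOf_dvd_natCard_of_map_smul {G β M : Type*} [Group G] [MulAction G β] [Finite β]
    [Group M] (g : G) (ψ : M) (p : β → M) (hp : ∀ b, p (g • b) = ψ * p b) :
    orderOf ψ ∣ Nat.card β := by
  classical
  have : Fintype (orbitRel.Quotient (Subgroup.zpowers g) β) := Fintype.ofFinite _
  rw [Nat.card_congr (selfEquivSigmaOrbits (Subgroup.zpowers g) β), Nat.card_sigma]
  refine Finset.dvd_sum fun ω _ => ?_
  rw [Nat.card_congr (orbitZPowersEquiv g ω.out), Nat.card_zmod]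
  refine orderOf_dvd_of_pow_eq_one ((mul_eq_right (b := p ω.out)).mp ?_)
  have hpow : ∀ (k : ℕ) (b : β), p (g ^ k • b) = ψ ^ k * p b := by
    intro k
    induction k with
    | zero => simp
    | succ k ih => intro b; rw [pow_succ', mul_smul, hp, ih, pow_succ', mul_assoc]
  rw [← hpow, pow_smul_eq_iff_minimalPeriod_dvd.mpr dvd_rfl]

theorem exists_perm_fiberwise_mulLeft {α ι H : Type*} [Finite α] [Group H] [Finite H]
    (cl : α → ι) (hdvd : ∀ j, Nat.card H ∣ Nat.card {x // cl x = j}) (ψ : H) :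
    ∃ (φ : Perm α) (p : α → H), (∀ x, cl (φ x) = cl x) ∧ ∀ x, p (φ x) = ψ * p x := by
  have hfib : ∀ j, ∃ r : ℕ, Nonempty ({x // cl x = j} ≃ Fin r × H) := fun j => by
    obtain ⟨r, hr⟩ := hdvd j
    exact ⟨r, Finite.card_eq.mp (by rw [hr, Nat.card_prod, Nat.card_fin, mul_comm])⟩
  choose r e using hfib
  let E : α ≃ (Σ j, Fin (r j)) × H :=
    (Equiv.sigmaFiberEquiv cl).symm.trans
      ((Equiv.sigmaCongrRight fun j => (e j).some).trans (Equiv.sigmaProdDistrib _ H).symm)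
  have hE : ∀ x, (E x).1.1 = cl x := fun x => rfl
  refine ⟨E.trans ((Equiv.prodCongr (Equiv.refl _) (Equiv.mulLeft ψ)).trans E.symm),
    fun x => (E x).2, fun x => ?_, fun x => ?_⟩
  · rw [← hE, ← hE x]; simp
  · simp

theorem Equiv.Perm.image_finset_eq_self_iff {α : Type*} [DecidableEq α] (σ : Perm α)
    (s : Finset α) : s.image σ = s ↔ ∀ x, σ x ∈ s ↔ x ∈ s := by
  refine ⟨fun h x => ?_, fun h => ?_⟩
  · conv_lhs => rw [← h]
    exact σ.injective.mem_finset_image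
  ext y
  rw [Finset.mem_image]
  exact ⟨fun ⟨x, hx, hxy⟩ => hxy ▸ (h x).mpr hx,
    fun hy => ⟨σ.symm y, (h _).mp (by simpa using hy), by simp⟩⟩

theorem Equiv.Perm.pow_factorial_eq_one_of_forall_mem_iff {α ι : Type*} (ψ : Perm α)
    (C : ι → Finset α) (hcov : ∀ x, ∃ k, x ∈ C k) (hψ : ∀ k x, ψ x ∈ C k ↔ x ∈ C k) {c : ℕ}
    (hc : ∀ k, (C k).card ≤ c) : ψ ^ c.factorial = 1 := by
  ext x
  obtain ⟨k, hx⟩ := hcov x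
  have hτ : ψ.subtypePerm (hψ k) ^ c.factorial = 1 := by
    refine orderOf_dvd_iff_pow_eq_one.mp ((orderOf_dvd_natCard _).trans ?_)
    rw [Nat.card_perm, Nat.card_eq_fintype_card, Fintype.card_coe]
    exact Nat.factorial_dvd_factorial (hc k)
  simpa [subtypePerm_pow] using congrArg Subtype.val (Perm.ext_iff.mp hτ ⟨x, hx⟩)

theorem exists_perm_orderOf_eq_forall_mem_iff {α ι : Type*} (C : ι → Finset α)
    (hdisj : Pairwise (Disjoint on C)) {q : ℕ} [Fact q.Prime] {k : ι} (hq : q ≤ (C k).card) :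
    ∃ ψ : Perm α, orderOf ψ = q ∧ ∀ k' x, ψ x ∈ C k' ↔ x ∈ C k' := by
  classical
  obtain ⟨σ, hσ⟩ := exists_prime_orderOf_dvd_card' (G := Perm (C k)) q (by
    rw [Nat.card_perm, Nat.card_eq_fintype_card, Fintype.card_coe]
    exact Nat.dvd_factorial (Fact.out : q.Prime).pos hq)
  refine ⟨Perm.ofSubtype σ, by rw [orderOf_injective _ Perm.ofSubtype_injective, hσ],
    fun k' x => ?_⟩
  by_cases hx : x ∈ C k
  · have hσx : Perm.ofSubtype σ x ∈ C k := by
      rw [Perm.ofSubtype_apply_of_mem σ hx]; exact (σ _).2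
    obtain rfl | hk := eq_or_ne k k'
    · exact iff_of_true hσx hx
    · exact iff_of_false (Finset.disjoint_left.mp (hdisj hk) hσx)
        (Finset.disjoint_left.mp (hdisj hk) hx)
  · rw [Perm.ofSubtype_apply_of_not_mem σ hx]

theorem eq_one_of_gcd_card_factorial_eq_one {α β ι κ : Type*} [DecidableEq α]
    [DecidableEq β] [Fintype ι] [Fintype κ] {B : ι → Finset α} {C : κ → Finset β}
    (hCcov : ∀ x, ∃ k, x ∈ C k) {φ : Perm α} {ψ : Perm β} (hφ : ∀ j, (B j).image φ = B j)
    (hψ : ∀ k, (C k).image ψ = C k) {p : α → Perm β} (hp : ∀ i, p (φ i) = ψ * p i)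
    (hgcd : Nat.gcd (Finset.univ.gcd fun j => (B j).card)
      (Finset.univ.sup fun k => (C k).card).factorial = 1) :
    ψ = 1 := by
  have hB : ∀ j, orderOf ψ ∣ (B j).card := fun j => by
    simpa [Nat.card_eq_finsetCard] using orderOf_dvd_natCard_of_map_smul
      (φ.subtypePerm ((φ.image_finset_eq_self_iff _).mp (hφ j))) ψ (fun i : B j => p i)
      fun i => hp i
  have hC : orderOf ψ ∣ (Finset.univ.sup fun k => (C k).card).factorial :=
    orderOf_dvd_of_pow_eq_one (ψ.pow_factorial_eq_one_of_forall_mem_iff C hCcov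
      (fun k => (ψ.image_finset_eq_self_iff _).mp (hψ k))
      fun k => Finset.le_sup (f := fun k => (C k).card) (Finset.mem_univ k))
  exact orderOf_eq_one_iff.mp
    (Nat.dvd_one.mp (hgcd ▸ Nat.dvd_gcd (Finset.dvd_gcd fun j _ => hB j) hC))

theorem exists_ne_one_of_prime_dvd_card_factorial {α β ι κ : Type*} [Fintype α] [DecidableEq α]
    [Fintype β] [DecidableEq β] [Fintype κ] {B : ι → Finset α}
    (hBdisj : Pairwise (Disjoint on B)) (hBcov : ∀ i, ∃ j, i ∈ B j) {C : κ → Finset β}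
    (hCdisj : Pairwise (Disjoint on C))
    {q : ℕ} (hq : q.Prime) (hqB : ∀ j, q ∣ (B j).card)
    (hqC : q ∣ (Finset.univ.sup fun k => (C k).card).factorial) :
    ∃ (φ : Perm α) (ψ : Perm β) (p : α → Perm β), (∀ j, (B j).image φ = B j) ∧
      (∀ k, (C k).image ψ = C k) ∧ (∀ i, p (φ i) = ψ * p i) ∧ ψ ≠ 1 := by
  have := Fact.mk hq
  obtain ⟨k, -, hk⟩ := (Finset.le_sup_iff hq.pos).mp (hq.dvd_factorial.mp hqC)
  obtain ⟨ψ, hψq, hψC⟩ := exists_perm_orderOf_eq_forall_mem_iff C hCdisj hk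
  choose cl hcl using hBcov
  have hclB : ∀ i j, cl i = j ↔ i ∈ B j := fun i j =>
    ⟨fun h => h ▸ hcl i,
      fun hi => by_contra fun h => Finset.disjoint_left.mp (hBdisj h) (hcl i) hi⟩
  have hfib : ∀ j, Nat.card (Subgroup.zpowers ψ) ∣ Nat.card {i // cl i = j} := fun j => by
    rw [Nat.card_zpowers, hψq, Nat.card_congr (Equiv.subtypeEquivRight (hclB · j)),
      Nat.card_eq_finsetCard]
    exact hqB j
  obtain ⟨φ, p, hφ, hp⟩ := exists_perm_fiberwise_mulLeft cl hfib ⟨ψ, Subgroup.mem_zpowers ψ⟩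
  refine ⟨φ, ψ, fun i => p i, fun j => (φ.image_finset_eq_self_iff _).mpr fun i => ?_,
    fun k => (ψ.image_finset_eq_self_iff _).mpr (hψC k), fun i => by simp [hp], ?_⟩
  · rw [← hclB, ← hclB, hφ]
  · rintro rfl
    exact hq.one_lt.ne' (hψq ▸ orderOf_one)

theorem act_eq_self_iff {h n : ℕ} {g : GG h n} (hg : (g.2.2 : Perm (Fin n)) = 1)
    (p : Profile h n) : act g p = p ↔ ∀ i, p (g.1 i) = g.2.1 * p i := by
  simp only [act, hg, mul_one, funext_iff]
  exact ⟨fun H i => by simpa using (H (g.1 i)).symm,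
    fun H i => by simpa using (H (g.1⁻¹ i)).symm⟩

theorem regular_iff_of_forall_omega_eq_one {h n : ℕ} {U : Set (GG h n)}
    (hU : ∀ g ∈ U, (g.2.2 : Perm (Fin n)) = 1) :
    Regular U ↔ ∀ g ∈ U, ∀ p, act g p = p → g.2.1 = 1 := by
  refine ⟨fun hreg g hg p hgp => ?_, fun H p => ⟨rho0 n, IsConj.refl _, fun g hg hgp =>
    Or.inl ⟨H g hg p hgp, hU g hg⟩⟩⟩
  obtain ⟨ψs, hψs, hstab⟩ := hreg p
  rcases hstab g hg hgp with ⟨hψ, -⟩ | ⟨hψ, hρ⟩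
  · exact hψ
  · -- here `ρ₀ = 1`, so `ψ*`, being conjugate to it, is `1` as well
    rw [← hρ, hU g hg, isConj_one_right] at hψs
    rw [hψ, hψs]

theorem stmt13_general {h n : Nat}
    (s t : Nat) (B : Fin s → Finset (Fin h)) (C : Fin t → Finset (Fin n))
    (hBdisj : ∀ j j', j ≠ j' → Disjoint (B j) (B j'))
    (hBcov : ∀ i : Fin h, ∃ j, i ∈ B j)
    (hCdisj : ∀ k k', k ≠ k' → Disjoint (C k) (C k'))
    (hCcov : ∀ x : Fin n, ∃ k, x ∈ C k) :
    Regular {g : GG h n | (∀ j, (B j).image ⇑g.1 = B j) ∧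
        (∀ k, (C k).image ⇑g.2.1 = C k) ∧ (g.2.2 : Equiv.Perm (Fin n)) = 1} ↔
      Nat.gcd (Finset.univ.gcd fun j => (B j).card)
        (Finset.univ.sup fun k => (C k).card).factorial = 1 := by
  rw [regular_iff_of_forall_omega_eq_one fun g hg => hg.2.2]
  refine ⟨fun hstab => by_contra fun hgcd => ?_, fun hgcd => ?_⟩
  · set d := Nat.gcd (Finset.univ.gcd fun j => (B j).card)
      (Finset.univ.sup fun k => (C k).card).factorial
    have hq : d.minFac ∣ d := Nat.minFac_dvd d
    obtain ⟨φ, ψ, p, hφ, hψ, hp, hψ1⟩ := exists_ne_one_of_prime_dvd_card_factorial hBdisj hBcov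
      hCdisj (Nat.minFac_prime hgcd) (fun j => hq.trans ((Nat.gcd_dvd_left _ _).trans
        (Finset.gcd_dvd (Finset.mem_univ j)))) (hq.trans (Nat.gcd_dvd_right _ _))
    exact hψ1 (hstab (φ, ψ, 1) ⟨hφ, hψ, rfl⟩ p ((act_eq_self_iff rfl p).mpr hp))
  · rintro ⟨φ, ψ, ρ⟩ ⟨hφ, hψ, hρ⟩ p hp
    exact eq_one_of_gcd_card_factorial_eq_one hCcov hφ hψ ((act_eq_self_iff hρ p).mp hp) hgcd

theorem stmt13 {h n : Nat} (hh : 2 ≤ h) (hn : 2 ≤ n)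
    (s t : Nat) (B : Fin s → Finset (Fin h)) (C : Fin t → Finset (Fin n))
    (hBne : ∀ j, (B j).Nonempty)
    (hBdisj : ∀ j j', j ≠ j' → Disjoint (B j) (B j'))
    (hBcov : ∀ i : Fin h, ∃ j, i ∈ B j)
    (hCne : ∀ k, (C k).Nonempty)
    (hCdisj : ∀ k k', k ≠ k' → Disjoint (C k) (C k'))
    (hCcov : ∀ x : Fin n, ∃ k, x ∈ C k) :
    Regular {g : GG h n | (∀ j, (B j).image ⇑g.1 = B j) ∧
        (∀ k, (C k).image ⇑g.2.1 = C k) ∧ (g.2.2 : Equiv.Perm (Fin n)) = 1} ↔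
      Nat.gcd (Finset.univ.gcd fun j => (B j).card)
        (Finset.univ.sup fun k => (C k).card).factorial = 1 :=
  stmt13_general s t B C hBdisj hBcov hCdisj hCcov
end

section
/- (Majority relation is ψ-antitone) Suppose p is a preference profile and (φ, ψ, ρ₀) ∈ Stab_U(p) for some U ≤ G. Then for all alternatives x, y ∈ N: at least ν individuals prefer x to y in p if and only if at least ν individuals prefer ψ(y) to ψ(x) in p, i.e., x >_ν y ⇔ ψ(y) >_ν ψ(x), where x >_ν y means |{i ∈ H : x >_{p_i} y}| ≥ ν. -/
lemma revPerm_inv {n : Nat} : (Fin.revPerm : Equiv.Perm (Fin n))⁻¹ = Fin.revPerm := rfl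

lemma key17 {h n : Nat} (p : Profile h n) (g : GG h n) (hstab : act g p = p)
    (hrho : (g.2.2 : Equiv.Perm (Fin n)) = rho0 n) (x y : Fin n) :
    prefCount p x y = prefCount p (g.2.1⁻¹ y) (g.2.1⁻¹ x) := by
  have hp : ∀ i, p i = g.2.1 * p (g.1⁻¹ i) * rho0 n := by
    intro i
    conv_lhs => rw [← hstab]
    simp [act, hrho]
  unfold prefCount
  apply Finset.card_bij' (fun a _ => g.1⁻¹ a) (fun a _ => g.1 a)
  · intro a ha
    simp only [Finset.mem_filter, Finset.mem_univ, true_and] at ha ⊢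
    rw [hp a] at ha
    simpa [rho0, revPerm_inv, Equiv.Perm.mul_apply, Fin.rev_lt_rev] using ha
  · intro a ha
    simp only [Finset.mem_filter, Finset.mem_univ, true_and] at ha ⊢
    rw [hp (g.1 a)]
    simpa [rho0, revPerm_inv, Equiv.Perm.mul_apply, Fin.rev_lt_rev] using ha
  · intro a _; simp
  · intro a _; simp

theorem stmt17 {h n : Nat} (hh : 2 ≤ h) (hn : 2 ≤ n) (ν : Nat)
    (U : Subgroup (GG h n)) (p : Profile h n) (g : GG h n)
    (hgU : g ∈ U) (hstab : act g p = p)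
    (hrho : (g.2.2 : Equiv.Perm (Fin n)) = rho0 n) :
    ∀ x y : Fin n,
      (ν ≤ prefCount p x y ↔ ν ≤ prefCount p (g.2.1 y) (g.2.1 x)) := by
  intro x y
  rw [key17 p g hstab hrho (g.2.1 y) (g.2.1 x)]
  simp
end

section
/- (Key step in the proof of existence of symmetric minimal majority rules) Let ψ ∈ S_n be an involution, and let Σ^C be an asymmetric transitive relation on N = {1,...,n} satisfying (x,y) ∈ Σ^C ⇔ (ψ(y),ψ(x)) ∈ Σ^C. Define Γ(z) = { x : (x,z) ∈ Σ^C } and Γ = ⋃_{z∈N} (Γ(z) ∩ Γ(ψ(z))). Then Γ ∩ ψ(Γ) = ∅, every fixed point of ψ lies outside Γ ∪ ψ(Γ), and for every x ∈ N, |{x, ψ(x)} ∩ Γ| ≤ 1. -/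
/-- `Γ = ⋃_z (Γ(z) ∩ Γ(ψ(z)))` where `Γ(z) = { x : (x,z) ∈ Σ^C }`. -/
def GammaSet {n : Nat} (ψ : Equiv.Perm (Fin n)) (R : Fin n → Fin n → Prop) :
    Set (Fin n) :=
  {x | ∃ z : Fin n, R x z ∧ R x (ψ z)}

theorem stmt19 {n : Nat} (ψ : Equiv.Perm (Fin n)) (hψ : ψ ^ 2 = 1)
    (R : Fin n → Fin n → Prop)
    (hasym : ∀ x y : Fin n, R x y → ¬ R y x)
    (htrans : ∀ x y z : Fin n, R x y → R y z → R x z)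
    (hsym : ∀ x y : Fin n, R x y ↔ R (ψ y) (ψ x)) :
    GammaSet ψ R ∩ (⇑ψ '' GammaSet ψ R) = ∅ ∧
    (∀ x : Fin n, ψ x = x → x ∉ GammaSet ψ R ∪ ⇑ψ '' GammaSet ψ R) ∧
    (∀ x : Fin n, ¬ (x ∈ GammaSet ψ R ∧ ψ x ∈ GammaSet ψ R)) := by
  have hinv : ∀ x : Fin n, ψ (ψ x) = x := by
    intro x
    have := congrArg (fun f : Equiv.Perm (Fin n) => f x) hψ
    simpa [pow_succ, Equiv.Perm.mul_apply] using this
  -- key: x and ψ x can't both be in Γ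
  have key : ∀ x : Fin n, ¬ (x ∈ GammaSet ψ R ∧ ψ x ∈ GammaSet ψ R) := by
    rintro x ⟨⟨z, hxz, hxψz⟩, ⟨w, hw1, hw2⟩⟩
    -- R (ψ x) w ⇒ R (ψ w) x ; R (ψ x) (ψ w) ⇒ R w x
    have h1 : R (ψ w) x := by
      have := (hsym (ψ x) w).mp hw1
      rwa [hinv] at this
    have h2 : R w x := by
      have := (hsym (ψ x) (ψ w)).mp hw2
      rwa [hinv, hinv] at this
    have hwz : R w z := htrans _ _ _ h2 hxz
    have hψwψz : R (ψ w) (ψ z) := htrans _ _ _ h1 hxψz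
    have hzw : R z w := by
      have := (hsym (ψ w) (ψ z)).mp hψwψz
      rwa [hinv, hinv] at this
    exact hasym _ _ hwz hzw
  refine ⟨?_, ?_, key⟩
  · ext x
    simp only [Set.mem_inter_iff, Set.mem_image, Set.mem_empty_iff_false, iff_false]
    rintro ⟨hx, y, hy, rfl⟩
    exact key y ⟨hy, hx⟩
  · rintro x hfix (hx | ⟨y, hy, hyx⟩)
    · exact key x ⟨hx, hfix.symm ▸ hx⟩
    · have hxy : ψ x = y := by rw [← hyx, hinv]
      have : y = x := by rw [← hxy, hfix]
      subst this
      exact key y ⟨hy, hxy.symm ▸ hy⟩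
end
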